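/- Let {Z_k : k ≥ 0} be a Galton–Watson process with Z₀ = 1 and offspring distribution f on ℕ with mean μ ∈ (1, ∞) and E[χ^{1+κ}] < ∞ for some 0 < κ ≤ 1, where χ ~ f. Then for any u with 1 < u < μ and any k ≥ r ≥ 1, P( Z_r ≥ u^r and Z_{r+1} ≤ u^{r+1} ) ≤ Q · u^{-κ r}, where Q = Q_{1+κ}·E[|χ - μ|^{1+κ}]/(μ - u)^{1+κ} and Q_{1+κ} is the Burkholder constant for exponent 1+κ. -/

import Mathlib

/-!
On the event, the `n = Z_r ≥ u ^ r` individuals of generation `r` have at most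
`u ^ (r + 1) ≤ u n` children, so their centred offspring sum `S_n = ∑_{i < n} (χ_i - μ)` satisfies
`|S_n| ≥ (μ - u) n`. The size `Z_r` is independent of the offspring numbers of generation `r`,
so it suffices to bound `P(|S_n| ≥ (μ - u) n)` for each fixed `n ≥ u ^ r`. With `p = 1 + κ ≤ 2`,
the von Bahr–Esseen inequality `E |S_n| ^ p ≤ 2 p n E |χ - μ| ^ p` and Markov's inequality bound it
by `2 p E |χ - μ| ^ p / (μ - u) ^ p * n ^ (-κ) ≤ 2 p E |χ - μ| ^ p / (μ - u) ^ p * u ^ (-κ r)`,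
so `Q = 2 (1 + κ)` works.
-/

open MeasureTheory ProbabilityTheory Finset

/-- A (non-delayed) Galton–Watson process built from an array `ξ` of offspring
variables: `ξ k i` is the number of children of the `i`-th individual of generation
`k`. -/
def gwProcess {Ω : Type*} (ξ : ℕ → ℕ → Ω → ℕ) : ℕ → Ω → ℕ
  | 0 => fun _ => 1
  | k + 1 => fun ω => ∑ i ∈ Finset.range (gwProcess ξ k ω), ξ k i ω

open Real
open scoped ENNReal

lemma abs_rpow_sub_one_mul_of_nonneg {q x : ℝ} (hq : 0 < q) (hx : 0 ≤ x) :
    |x| ^ (q - 1) * x = x ^ q := by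
  rcases hx.eq_or_lt with rfl | hx
  · simp [zero_rpow hq.ne']
  · rw [abs_of_pos hx, rpow_sub_one hx.ne', div_mul_cancel₀ _ hx.ne']

lemma abs_abs_rpow_sub_one_mul {q : ℝ} (hq : 0 < q) (x : ℝ) :
    |(|x| ^ (q - 1) * x)| = |x| ^ q := by
  rw [abs_mul, abs_of_nonneg (rpow_nonneg (abs_nonneg x) _),
    ← abs_rpow_sub_one_mul_of_nonneg hq (abs_nonneg x), abs_abs]

lemma rpow_sub_rpow_le_abs_sub_rpow {q a b : ℝ} (hq0 : 0 ≤ q) (hq1 : q ≤ 1)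
    (ha : 0 ≤ a) (hb : 0 ≤ b) : a ^ q - b ^ q ≤ |a - b| ^ q := by
  have : a ^ q ≤ (|a - b| + b) ^ q :=
    rpow_le_rpow ha (by linarith [le_abs_self (a - b)]) hq0
  linarith [rpow_add_le_add_rpow (abs_nonneg (a - b)) hb hq0 hq1]

/-- `|x| ^ (q - 1) * x` is the signed power `sign x * |x| ^ q`, which is `q`-Hölder. -/
lemma abs_rpow_sub_one_mul_sub_le {q : ℝ} (hq0 : 0 < q) (hq1 : q ≤ 1) (x y : ℝ) :
    |x| ^ (q - 1) * x - |y| ^ (q - 1) * y ≤ 2 * |x - y| ^ q := by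
  have hodd : ∀ z : ℝ, |z| ^ (q - 1) * z = -(|-z| ^ (q - 1) * -z) := fun z => by
    rw [abs_neg]; ring
  have hxy : 0 ≤ |x - y| ^ q := rpow_nonneg (abs_nonneg _) q
  rcases le_total 0 x with hx | hx <;> rcases le_total 0 y with hy | hy
  · rw [abs_rpow_sub_one_mul_of_nonneg hq0 hx, abs_rpow_sub_one_mul_of_nonneg hq0 hy]
    linarith [rpow_sub_rpow_le_abs_sub_rpow hq0.le hq1 hx hy]
  · rw [hodd y, abs_rpow_sub_one_mul_of_nonneg hq0 hx,
      abs_rpow_sub_one_mul_of_nonneg hq0 (neg_nonneg.2 hy)]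
    have hxle : x ^ q ≤ |x - y| ^ q := rpow_le_rpow hx (by rw [abs_of_nonneg] <;> linarith) hq0.le
    have hyle : (-y) ^ q ≤ |x - y| ^ q :=
      rpow_le_rpow (by linarith) (by rw [abs_of_nonneg] <;> linarith) hq0.le
    linarith
  · rw [hodd x, abs_rpow_sub_one_mul_of_nonneg hq0 hy,
      abs_rpow_sub_one_mul_of_nonneg hq0 (neg_nonneg.2 hx)]
    linarith [rpow_nonneg (neg_nonneg.2 hx) q, rpow_nonneg hy q]
  · rw [hodd x, hodd y, abs_rpow_sub_one_mul_of_nonneg hq0 (neg_nonneg.2 hx),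
      abs_rpow_sub_one_mul_of_nonneg hq0 (neg_nonneg.2 hy)]
    have := rpow_sub_rpow_le_abs_sub_rpow hq0.le hq1 (neg_nonneg.2 hy) (neg_nonneg.2 hx)
    rw [show -y - -x = x - y by ring] at this
    linarith

/-- Mean value theorem on `[a, a + b]`, then the Hölder bound for the derivative. -/
lemma abs_add_rpow_le_of_pos {p a b : ℝ} (hp1 : 1 < p) (hp2 : p ≤ 2) (hb : 0 < b) :
    |a + b| ^ p ≤ |a| ^ p + p * |a| ^ (p - 2) * a * b + 2 * p * |b| ^ p := by
  obtain ⟨c, ⟨hac, hcb⟩, hslope⟩ := exists_hasDerivAt_eq_slope (fun x => |x| ^ p)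
    (fun x => p * |x| ^ (p - 2) * x) (by linarith : a < a + b)
    ((continuous_abs.rpow_const fun _ => Or.inr (by linarith)).continuousOn)
    (fun x _ => hasDerivAt_abs_rpow x hp1)
  rw [add_sub_cancel_left, eq_div_iff hb.ne'] at hslope
  have hp2' : p - 2 = (p - 1) - 1 := by ring
  have hholder := abs_rpow_sub_one_mul_sub_le (q := p - 1) (by linarith) (by linarith) c a
  rw [← hp2', abs_of_pos (by linarith : 0 < c - a)] at hholder
  have hcab : (c - a) ^ (p - 1) ≤ b ^ (p - 1) :=
    rpow_le_rpow (by linarith) (by linarith) (by linarith)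
  have hbp : b ^ (p - 1) * b = b ^ p := by rw [rpow_sub_one hb.ne', div_mul_cancel₀ _ hb.ne']
  rw [abs_of_pos hb, ← hbp]
  have hstep : (|c| ^ (p - 2) * c - |a| ^ (p - 2) * a) * b ≤ 2 * b ^ (p - 1) * b :=
    mul_le_mul_of_nonneg_right (by linarith) hb.le
  nlinarith [hstep, hslope]

lemma abs_add_rpow_le {p : ℝ} (hp1 : 1 < p) (hp2 : p ≤ 2) (a b : ℝ) :
    |a + b| ^ p ≤ |a| ^ p + p * |a| ^ (p - 2) * a * b + 2 * p * |b| ^ p := by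
  rcases lt_trichotomy b 0 with hb | rfl | hb
  · have := abs_add_rpow_le_of_pos hp1 hp2 (a := -a) (neg_pos.2 hb)
    rw [← neg_add, abs_neg, abs_neg, abs_neg] at this
    convert this using 2
    ring
  · simp [zero_rpow (by linarith : p ≠ 0)]
  · exact abs_add_rpow_le_of_pos hp1 hp2 hb

lemma div_mul_rpow_le {p c x n : ℝ} (hp : 1 ≤ p) (hc : 0 < c) (hx : 0 < x) (hxn : x ≤ n) :
    n / (c * n) ^ p ≤ x ^ (1 - p) / c ^ p := by
  have hn : 0 < n := hx.trans_le hxn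
  calc n / (c * n) ^ p = n ^ (1 - p) / c ^ p := by
        rw [mul_rpow hc.le hn.le, rpow_sub hn, rpow_one]
        field_simp
    _ ≤ x ^ (1 - p) / c ^ p :=
        div_le_div_of_nonneg_right (rpow_le_rpow_of_nonpos hx hxn (by linarith)) (by positivity)

section VonBahrEsseen

variable {Ω ι : Type*} [MeasurableSpace Ω] {P : Measure Ω} [IsFiniteMeasure P] {p : ℝ}

lemma MeasureTheory.MemLp.integrable_abs_rpow {f : Ω → ℝ} (hp : 0 ≤ p)
    (hf : MemLp f (ENNReal.ofReal p) P) : Integrable (fun ω => |f ω| ^ p) P := by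
  simpa [ENNReal.toReal_ofReal hp] using hf.integrable_norm_rpow'

lemma MeasureTheory.MemLp.integrable_abs_rpow_sub_two_mul {f : Ω → ℝ} (hp : 1 < p)
    (hf : MemLp f (ENNReal.ofReal p) P) : Integrable (fun ω => |f ω| ^ (p - 2) * f ω) P := by
  have hf' : MemLp f (ENNReal.ofReal (p - 1)) P :=
    hf.mono_exponent (ENNReal.ofReal_le_ofReal (by linarith))
  refine (hf'.integrable_abs_rpow (by linarith)).mono'
    ((hf.1.aemeasurable.abs.pow_const _).mul hf.1.aemeasurable).aestronglyMeasurable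
    (ae_of_all _ fun ω => ?_)
  rw [Real.norm_eq_abs, show p - 2 = (p - 1) - 1 by ring]
  exact (abs_abs_rpow_sub_one_mul (by linarith) _).le

/-- Integrate `abs_add_rpow_le`: the cross term vanishes by independence and centering. -/
lemma integral_abs_add_rpow_le (hp1 : 1 < p) (hp2 : p ≤ 2) {S Y : Ω → ℝ}
    (hS : MemLp S (ENNReal.ofReal p) P) (hY : MemLp Y (ENNReal.ofReal p) P)
    (hindep : IndepFun S Y P) (hmean : ∫ ω, Y ω ∂P = 0) :
    ∫ ω, |S ω + Y ω| ^ p ∂P ≤ ∫ ω, |S ω| ^ p ∂P + 2 * p * ∫ ω, |Y ω| ^ p ∂P := by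
  have hindepφ : IndepFun (fun ω => |S ω| ^ (p - 2) * S ω) Y P :=
    hindep.comp ((measurable_abs.pow_const _).mul measurable_id) measurable_id
  have hφS := hS.integrable_abs_rpow_sub_two_mul hp1
  have hYint : Integrable Y P := hY.integrable (ENNReal.one_le_ofReal.2 (by linarith))
  have hcross : Integrable (fun ω => p * (|S ω| ^ (p - 2) * S ω * Y ω)) P :=
    (hindepφ.integrable_mul hφS hYint).const_mul p
  have hcross0 : ∫ ω, p * (|S ω| ^ (p - 2) * S ω * Y ω) ∂P = 0 := by
    rw [integral_const_mul,
      show (fun ω => |S ω| ^ (p - 2) * S ω * Y ω) = (fun ω => |S ω| ^ (p - 2) * S ω) * Y from rfl,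
      hindepφ.integral_mul_eq_mul_integral hφS.1 hYint.1, hmean, mul_zero, mul_zero]
  have hintS := hS.integrable_abs_rpow (by linarith)
  have hintY := (hY.integrable_abs_rpow (by linarith)).const_mul (2 * p)
  calc ∫ ω, |S ω + Y ω| ^ p ∂P
      ≤ ∫ ω, (|S ω| ^ p + p * (|S ω| ^ (p - 2) * S ω * Y ω) + 2 * p * |Y ω| ^ p) ∂P :=
        integral_mono ((hS.add hY).integrable_abs_rpow (by linarith))
          ((hintS.fun_add hcross).fun_add hintY)
          fun ω => by linarith [abs_add_rpow_le hp1 hp2 (S ω) (Y ω)]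
    _ = ∫ ω, |S ω| ^ p ∂P + 2 * p * ∫ ω, |Y ω| ^ p ∂P := by
        rw [integral_add (hintS.fun_add hcross) hintY, integral_add hintS hcross, hcross0,
          integral_const_mul, add_zero]

/-- The von Bahr–Esseen inequality, with constant `2 * p`. -/
theorem integral_abs_sum_rpow_le (hp1 : 1 < p) (hp2 : p ≤ 2) {Y : ι → Ω → ℝ}
    (hY : ∀ i, MemLp (Y i) (ENNReal.ofReal p) P) (hindep : iIndepFun Y P)
    (hmean : ∀ i, ∫ ω, Y i ω ∂P = 0) (s : Finset ι) :
    ∫ ω, |∑ i ∈ s, Y i ω| ^ p ∂P ≤ 2 * p * ∑ i ∈ s, ∫ ω, |Y i ω| ^ p ∂P := by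
  classical
  induction s using Finset.induction_on with
  | empty => simp [Real.zero_rpow (by linarith : p ≠ 0)]
  | insert j s hj ih =>
    have hS : MemLp (fun ω => ∑ i ∈ s, Y i ω) (ENNReal.ofReal p) P :=
      memLp_finsetSum s fun i _ => hY i
    have hindepS : IndepFun (fun ω => ∑ i ∈ s, Y i ω) (Y j) P := by
      simpa only [Finset.sum_fn] using
        hindep.indepFun_finsetSum_of_notMem₀ (fun i => (hY i).1.aemeasurable) hj
    simp_rw [sum_insert hj, add_comm (Y j _)]
    linarith [integral_abs_add_rpow_le hp1 hp2 hS (hY j) hindepS (hmean j)]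

lemma measureReal_le_abs_sum_le (hp1 : 1 < p) (hp2 : p ≤ 2) {Y : ℕ → Ω → ℝ}
    (hY : ∀ i, MemLp (Y i) (ENNReal.ofReal p) P) (hindep : iIndepFun Y P)
    (hmean : ∀ i, ∫ ω, Y i ω ∂P = 0) {M : ℝ} (hM : ∀ i, ∫ ω, |Y i ω| ^ p ∂P ≤ M) (n : ℕ)
    {t : ℝ} (ht : 0 < t) :
    P.real {ω | t ≤ |∑ i ∈ range n, Y i ω|} ≤ 2 * p * n * M / t ^ p := by
  have htp : 0 < t ^ p := rpow_pos_of_pos ht p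
  have hint : Integrable (fun ω => |∑ i ∈ range n, Y i ω| ^ p) P :=
    (memLp_finsetSum (range n) fun i _ => hY i).integrable_abs_rpow (by linarith)
  have hmarkov := mul_meas_ge_le_integral_of_nonneg
    (ae_of_all _ fun ω => rpow_nonneg (abs_nonneg _) p) hint (t ^ p)
  have hsub : {ω | t ≤ |∑ i ∈ range n, Y i ω|} ⊆ {ω | t ^ p ≤ |∑ i ∈ range n, Y i ω| ^ p} :=
    fun ω hω => rpow_le_rpow ht.le hω (by linarith)
  have hmoment : ∫ ω, |∑ i ∈ range n, Y i ω| ^ p ∂P ≤ 2 * p * n * M := by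
    calc ∫ ω, |∑ i ∈ range n, Y i ω| ^ p ∂P ≤ 2 * p * ∑ i ∈ range n, ∫ ω, |Y i ω| ^ p ∂P :=
          integral_abs_sum_rpow_le hp1 hp2 hY hindep hmean _
      _ ≤ 2 * p * n * M := by
          rw [mul_assoc _ (n : ℝ)]
          gcongr
          simpa using Finset.sum_le_sum fun i (_ : i ∈ range n) => hM i
  rw [le_div_iff₀ htp, mul_comm]
  exact (mul_le_mul_of_nonneg_left (measureReal_mono hsub) htp.le).trans (hmarkov.trans hmoment)

lemma measureReal_mul_le_abs_sum_le (hp1 : 1 < p) (hp2 : p ≤ 2) {Y : ℕ → Ω → ℝ}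
    (hY : ∀ i, MemLp (Y i) (ENNReal.ofReal p) P) (hindep : iIndepFun Y P)
    (hmean : ∀ i, ∫ ω, Y i ω ∂P = 0) {M : ℝ} (hM : ∀ i, ∫ ω, |Y i ω| ^ p ∂P ≤ M) {c x : ℝ}
    (hc : 0 < c) (hx : 0 < x) {n : ℕ} (hxn : x ≤ n) :
    P.real {ω | c * n ≤ |∑ i ∈ range n, Y i ω|} ≤ 2 * p * M / c ^ p * x ^ (1 - p) := by
  have hM0 : 0 ≤ M := (integral_nonneg fun ω => rpow_nonneg (abs_nonneg _) p).trans (hM 0)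
  calc P.real {ω | c * n ≤ |∑ i ∈ range n, Y i ω|} ≤ 2 * p * n * M / (c * n) ^ p :=
        measureReal_le_abs_sum_le hp1 hp2 hY hindep hmean hM n (mul_pos hc (hx.trans_le hxn))
    _ = 2 * p * M * (n / (c * n) ^ p) := by ring
    _ ≤ 2 * p * M * (x ^ (1 - p) / c ^ p) :=
        mul_le_mul_of_nonneg_left (div_mul_rpow_le hp1.le hc hx hxn) (by positivity)
    _ = 2 * p * M / c ^ p * x ^ (1 - p) := by ring

end VonBahrEsseen

lemma measure_iUnion_preimage_singleton_inter_le {Ω : Type*} [MeasurableSpace Ω]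
    {P : Measure Ω} [IsProbabilityMeasure P] {N : Ω → ℕ} (hN : Measurable N)
    {A : ℕ → Set Ω} {c : ℝ≥0∞} (h : ∀ n, P (N ⁻¹' {n} ∩ A n) ≤ P (N ⁻¹' {n}) * c) :
    P (⋃ n, N ⁻¹' {n} ∩ A n) ≤ c := by
  have htotal : ∑' n, P (N ⁻¹' {n}) = 1 := by
    rw [← measure_iUnion (fun m n hmn => Set.disjoint_left.2 fun ω hm hn => hmn (hm.symm.trans hn))
      fun n => hN (measurableSet_singleton n), ← Set.preimage_iUnion, Set.iUnion_of_singleton,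
      Set.preimage_univ, measure_univ]
  calc P (⋃ n, N ⁻¹' {n} ∩ A n) ≤ ∑' n, P (N ⁻¹' {n} ∩ A n) := measure_iUnion_le _
    _ ≤ ∑' n, P (N ⁻¹' {n}) * c := ENNReal.tsum_le_tsum h
    _ = c := by rw [ENNReal.tsum_mul_right, htotal, one_mul]

section Law

variable {Ω : Type*} [MeasurableSpace Ω] {P : Measure Ω} {f : ℕ → ℝ} {ρ : Ω → ℕ}

lemma map_measureReal_singleton (hρ : Measurable ρ)
    (hlaw : ∀ t, (P {ω | ρ ω = t}).toReal = f t) (t : ℕ) : (P.map ρ).real {t} = f t := by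
  rw [measureReal_def, Measure.map_apply hρ (measurableSet_singleton t)]
  exact hlaw t

lemma integrable_comp_of_summable [IsFiniteMeasure P] (hρ : Measurable ρ)
    (hlaw : ∀ t, (P {ω | ρ ω = t}).toReal = f t) {g : ℕ → ℝ}
    (hg : Summable fun t => |g t| * f t) : Integrable (fun ω => g (ρ ω)) P := by
  have hg_meas : AEStronglyMeasurable g (P.map ρ) := measurable_from_top.aestronglyMeasurable
  refine (integrable_map_measure hg_meas hρ.aemeasurable).1 ⟨hg_meas, ?_⟩
  rw [HasFiniteIntegral, lintegral_countable']
  convert hg.tsum_ofReal_lt_top using 3 with t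
  rw [ENNReal.ofReal_mul (abs_nonneg _), Real.enorm_eq_ofReal_abs,
    ← map_measureReal_singleton hρ hlaw t, measureReal_def,
    ENNReal.ofReal_toReal (measure_ne_top _ _)]

lemma integral_comp_eq_tsum (hρ : Measurable ρ)
    (hlaw : ∀ t, (P {ω | ρ ω = t}).toReal = f t) {g : ℕ → ℝ}
    (hg : Integrable (fun ω => g (ρ ω)) P) : ∫ ω, g (ρ ω) ∂P = ∑' t, f t * g t := by
  have hg_meas : AEStronglyMeasurable g (P.map ρ) := measurable_from_top.aestronglyMeasurable
  rw [← integral_map hρ.aemeasurable hg_meas,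
    integral_countable ((integrable_map_measure hg_meas hρ.aemeasurable).2 hg)]
  simp only [map_measureReal_singleton hρ hlaw, smul_eq_mul]

lemma memLp_natCast_comp_of_summable [IsFiniteMeasure P] (hρ : Measurable ρ)
    (hlaw : ∀ t, (P {ω | ρ ω = t}).toReal = f t) {p : ℝ} (hp : 0 < p)
    (hsum : Summable fun t : ℕ => f t * (t : ℝ) ^ p) :
    MemLp (fun ω => (ρ ω : ℝ)) (ENNReal.ofReal p) P := by
  have hmeas : AEStronglyMeasurable (fun ω => (ρ ω : ℝ)) P :=
    (measurable_from_top.comp hρ).aestronglyMeasurable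
  rw [← integrable_norm_rpow_iff hmeas (by simpa using hp) ENNReal.ofReal_ne_top,
    ENNReal.toReal_ofReal hp.le]
  refine integrable_comp_of_summable hρ hlaw (g := fun t : ℕ => ‖(t : ℝ)‖ ^ p) ?_
  simpa [abs_of_nonneg (rpow_nonneg (Nat.cast_nonneg _) p), mul_comm] using hsum

end Law

lemma sub_mul_gwProcess_le_abs_sum_sub {Ω : Type*} {ξ : ℕ → ℕ → Ω → ℕ} {r : ℕ} {μ u : ℝ}
    {ω : Ω} (hu : 0 < u) (hZ : u ^ r ≤ (gwProcess ξ r ω : ℝ))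
    (hZnext : (gwProcess ξ (r + 1) ω : ℝ) ≤ u ^ (r + 1)) :
    (μ - u) * gwProcess ξ r ω ≤ |∑ i ∈ range (gwProcess ξ r ω), ((ξ r i ω : ℝ) - μ)| := by
  have hnext : (gwProcess ξ (r + 1) ω : ℝ) = ∑ i ∈ range (gwProcess ξ r ω), (ξ r i ω : ℝ) := by
    simp [gwProcess]
  have hupow : u ^ (r + 1) ≤ u * gwProcess ξ r ω := by
    rw [pow_succ, mul_comm]
    gcongr
  refine le_trans ?_ (neg_le_abs _)
  rw [Finset.sum_sub_distrib, sum_const, card_range, nsmul_eq_mul, ← hnext]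
  linarith

section GaltonWatson

variable {Ω : Type*} [mΩ : MeasurableSpace Ω] {ξ : ℕ → ℕ → Ω → ℕ}

lemma measurable_gwProcess {r : ℕ} (hξ : ∀ k < r, ∀ i, Measurable (ξ k i)) :
    Measurable (gwProcess ξ r) := by
  induction r with
  | zero => exact measurable_const
  | succ r ih =>
    have hsum : Measurable fun x : Ω × ℕ => ∑ i ∈ range x.2, ξ r i x.1 :=
      measurable_from_prod_countable_left fun n =>
        Finset.measurable_sum (range n) fun i _ => hξ r (Nat.lt_succ_self r) i
    exact hsum.comp (measurable_id.prodMk (ih fun k hk => hξ k (Nat.lt_succ_of_lt hk)))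

lemma indepFun_gwProcess_offspring {P : Measure Ω} (hξ : ∀ k i, Measurable (ξ k i))
    (hindep : iIndepFun (fun (q : ℕ × ℕ) ω => ξ q.1 q.2 ω) P) (r : ℕ) :
    IndepFun (gwProcess ξ r) (fun ω i => ξ r i ω) P := by
  let m : ℕ × ℕ → MeasurableSpace Ω := fun q => MeasurableSpace.comap (ξ q.1 q.2) inferInstance
  have hm : iIndep m P := hindep
  have hdisj : Disjoint {q : ℕ × ℕ | q.1 < r} {q : ℕ × ℕ | q.1 = r} :=
    Set.disjoint_left.2 fun q (hlt : q.1 < r) (heq : q.1 = r) => hlt.ne heq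
  have hpast_present := indep_iSup_of_disjoint (fun q => (hξ q.1 q.2).comap_le) hm hdisj
  have hZ : Measurable[⨆ q ∈ {q : ℕ × ℕ | q.1 < r}, m q] (gwProcess ξ r) :=
    measurable_gwProcess (mΩ := ⨆ q ∈ {q : ℕ × ℕ | q.1 < r}, m q) fun k hk i =>
      Measurable.of_comap_le
        (le_iSup₂ (f := fun q (_ : q ∈ {q : ℕ × ℕ | q.1 < r}) => m q) (k, i) hk)
  have hrow : Measurable[⨆ q ∈ {q : ℕ × ℕ | q.1 = r}, m q] (fun ω i => ξ r i ω) := by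
    let : MeasurableSpace Ω := ⨆ q ∈ {q : ℕ × ℕ | q.1 = r}, m q
    exact measurable_pi_iff.2 fun i => Measurable.of_comap_le
      (le_iSup₂ (f := fun q (_ : q ∈ {q : ℕ × ℕ | q.1 = r}) => m q) (r, i) rfl)
  rw [IndepFun_iff_Indep]
  exact indep_of_indep_of_le_right (indep_of_indep_of_le_left hpast_present hZ.comap_le)
    hrow.comap_le

end GaltonWatson

theorem measureReal_gwProcess_ge_le {Ω : Type*} [MeasurableSpace Ω] {P : Measure Ω}
    [IsProbabilityMeasure P] {p : ℝ} (hp1 : 1 < p) (hp2 : p ≤ 2) {ξ : ℕ → ℕ → Ω → ℕ}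
    (hξ : ∀ k i, Measurable (ξ k i)) (hindep : iIndepFun (fun (q : ℕ × ℕ) ω => ξ q.1 q.2 ω) P)
    {r : ℕ} {μ M u : ℝ} (hLp : ∀ i, MemLp (fun ω => (ξ r i ω : ℝ) - μ) (ENNReal.ofReal p) P)
    (hmean : ∀ i, ∫ ω, ((ξ r i ω : ℝ) - μ) ∂P = 0)
    (hM : ∀ i, ∫ ω, |(ξ r i ω : ℝ) - μ| ^ p ∂P ≤ M) (hu : 0 < u) (huμ : u < μ) :
    P.real {ω | u ^ r ≤ (gwProcess ξ r ω : ℝ) ∧ (gwProcess ξ (r + 1) ω : ℝ) ≤ u ^ (r + 1)} ≤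
      2 * p * M / (μ - u) ^ p * u ^ (-((p - 1) * r)) := by
  set K := 2 * p * M / (μ - u) ^ p * u ^ (-((p - 1) * r))
  set B : ℕ → Set (ℕ → ℕ) := fun n =>
    {x | u ^ r ≤ (n : ℝ) ∧ (μ - u) * n ≤ |∑ i ∈ range n, ((x i : ℝ) - μ)|}
  have hK : 0 ≤ K := by
    have : 0 ≤ M := (integral_nonneg fun ω => rpow_nonneg (abs_nonneg _) p).trans (hM 0)
    have : 0 < μ - u := sub_pos.2 huμ
    positivity
  have hYindep : iIndepFun (fun i ω => (ξ r i ω : ℝ) - μ) P :=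
    (hindep.precomp (g := fun i => (r, i)) fun i j h => (Prod.mk.inj h).2).comp
      (fun _ (x : ℕ) => (x : ℝ) - μ) fun _ => measurable_from_top
  have hB : ∀ n, P.real ((fun ω i => ξ r i ω) ⁻¹' B n) ≤ K := by
    intro n
    by_cases hn : u ^ r ≤ (n : ℝ)
    · refine (measureReal_mono fun ω hω => hω.2).trans <|
        (measureReal_mul_le_abs_sum_le hp1 hp2 hLp hYindep hmean hM (sub_pos.2 huμ)
          (pow_pos hu r) hn).trans_eq ?_
      rw [← rpow_natCast, ← rpow_mul hu.le, show (r : ℝ) * (1 - p) = -((p - 1) * r) by ring]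
    · simpa [B, hn] using hK
  have hcover : {ω | u ^ r ≤ (gwProcess ξ r ω : ℝ) ∧ (gwProcess ξ (r + 1) ω : ℝ) ≤ u ^ (r + 1)} ⊆
      ⋃ n, gwProcess ξ r ⁻¹' {n} ∩ (fun ω i => ξ r i ω) ⁻¹' B n := fun ω ⟨hZ, hZnext⟩ =>
    Set.mem_iUnion.2 ⟨_, rfl, hZ, sub_mul_gwProcess_le_abs_sum_sub hu hZ hZnext⟩
  have hcond : ∀ n, P (gwProcess ξ r ⁻¹' {n} ∩ (fun ω i => ξ r i ω) ⁻¹' B n) ≤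
      P (gwProcess ξ r ⁻¹' {n}) * ENNReal.ofReal K := by
    intro n
    have hBmeas : MeasurableSet (B n) := by
      simp only [B, Set.ofPred_and]
      exact (MeasurableSet.const _).inter (measurableSet_le measurable_const (by fun_prop))
    rw [(indepFun_gwProcess_offspring hξ hindep r).measure_inter_preimage_eq_mul _ _
      (measurableSet_singleton n) hBmeas]
    gcongr
    exact (ENNReal.le_ofReal_iff_toReal_le (measure_ne_top P _) hK).2 (hB n)
  exact ENNReal.toReal_le_of_le_ofReal hK ((measure_mono hcover).trans
    (measure_iUnion_preimage_singleton_inter_le (measurable_gwProcess fun k _ i => hξ k i) hcond))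

theorem stmt_15 (κ : ℝ) (hκ0 : 0 < κ) (hκ1 : κ ≤ 1) :
    ∃ Q : ℝ, 0 < Q ∧
      ∀ (Ω : Type) (_ : MeasurableSpace Ω) (P : Measure Ω), IsProbabilityMeasure P →
        ∀ (f : ℕ → ℝ) (ξ : ℕ → ℕ → Ω → ℕ),
          (∀ t, 0 ≤ f t) → (∑' t, f t = 1) →
          (∀ k i, Measurable (ξ k i)) →
          (∀ k i t, (P {ω | ξ k i ω = t}).toReal = f t) →
          iIndepFun (fun (p : ℕ × ℕ) ω => ξ p.1 p.2 ω) P →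
          ∀ μm : ℝ, 1 < μm → (∑' t, f t * t = μm) →
            Summable (fun t : ℕ => f t * (t : ℝ) ^ (1 + κ)) →
            ∀ u : ℝ, 1 < u → u < μm →
              ∀ r : ℕ, 1 ≤ r →
                (P {ω | u ^ r ≤ (gwProcess ξ r ω : ℝ) ∧
                    (gwProcess ξ (r + 1) ω : ℝ) ≤ u ^ (r + 1)}).toReal ≤
                  Q * (∑' t : ℕ, f t * |(t : ℝ) - μm| ^ (1 + κ)) / (μm - u) ^ (1 + κ) *
                    u ^ (-(κ * r)) := by
  refine ⟨2 * (1 + κ), by linarith, ?_⟩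
  intro Ω _ P _ f ξ _ _ hξ hlaw hindep μ _ hmean hsum u hu huμ r _
  have hp : 0 < 1 + κ := by linarith
  have hX : ∀ i, MemLp (fun ω => (ξ r i ω : ℝ)) (ENNReal.ofReal (1 + κ)) P := fun i =>
    memLp_natCast_comp_of_summable (hξ r i) (hlaw r i) hp hsum
  have hY : ∀ i, MemLp (fun ω => (ξ r i ω : ℝ) - μ) (ENNReal.ofReal (1 + κ)) P := fun i =>
    (hX i).sub (memLp_const μ)
  have hYmean : ∀ i, ∫ ω, ((ξ r i ω : ℝ) - μ) ∂P = 0 := fun i => by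
    have hXint := (hX i).integrable (ENNReal.one_le_ofReal.2 (by linarith))
    rw [integral_sub hXint (integrable_const μ), integral_comp_eq_tsum (hξ r i) (hlaw r i) hXint,
      hmean]
    simp
  have hYmoment : ∀ i, ∫ ω, |(ξ r i ω : ℝ) - μ| ^ (1 + κ) ∂P =
      ∑' t : ℕ, f t * |(t : ℝ) - μ| ^ (1 + κ) := fun i =>
    integral_comp_eq_tsum (g := fun t : ℕ => |(t : ℝ) - μ| ^ (1 + κ)) (hξ r i) (hlaw r i)
      ((hY i).integrable_abs_rpow hp.le)
  have := measureReal_gwProcess_ge_le (by linarith) (by linarith) hξ hindep hY hYmean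
    (fun i => (hYmoment i).le) (by linarith) huμ
  rw [add_sub_cancel_left] at this
  exact this.trans_eq (by ring)
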